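/- arXiv:1006.0075 — 4 statements merged into one kernel-verified Lean document; each statement's English description precedes it below -/
import Mathlib

section
/- For each n ∈ ℤ define F-linear operators on A ⊕ A by L_n(f, g) = (X^{n+1} ∂f, X^{n+1} ∂g) and W_n(f, g) = (0, X^{n+1} ∂f) (realizing L_n = (a⁺)^{n+1} a and W_n = (a⁺)^{n+1} b⁺ a with b(f,g) = (g, 0) and b⁺(f,g) = (0, f)). Then for all m, n ∈ ℤ: L_m ∘ L_n − L_n ∘ L_m = (n − m) L_{m+n}, L_m ∘ W_n − W_n ∘ L_m = (n − m) W_{m+n}, and W_m ∘ W_n − W_n ∘ W_m = 0; i.e. these operators realize the W(2,2) Lie algebra. -/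
/-!
With `e n = X^{n+1} ∂`, one has `e n (X^k) = k X^{n+k}`, so on monomials
`[e m, e n] X^k = ((n + k) k - (m + k) k) X^{m+n+k} = (n - m) e (m+n) X^k`: the operators
`e n` satisfy the Witt algebra relations. Since `L n` is `e n` on both components and `W n`
is `e n` from the first component into the second, each bracket reduces componentwise to this
one, and `W m * W n = 0` because `W n` kills the second component, which contains the image
of `W m`.
-/

open LaurentPolynomial

theorem LaurentPolynomial.linearMap_ext {R M : Type*} [CommSemiring R] [AddCommMonoid M]
    [Module R M] {φ ψ : R[T;T⁻¹] →ₗ[R] M} (h : ∀ k, φ (T k) = ψ (T k)) : φ = ψ :=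
  AddMonoidAlgebra.lhom_ext' fun k => LinearMap.ext_ring (h k)

section WittOperators

variable {R : Type*} [CommRing R]

noncomputable def wittOp (D : Module.End R R[T;T⁻¹]) (n : ℤ) : Module.End R R[T;T⁻¹] :=
  LinearMap.mulLeft R (T (n + 1)) ∘ₗ D

theorem wittOp_apply (D : Module.End R R[T;T⁻¹]) (n : ℤ) (f : R[T;T⁻¹]) :
    wittOp D n f = T (n + 1) * D f := rfl

theorem wittOp_T {D : Module.End R R[T;T⁻¹]} (hD : ∀ k : ℤ, D (T k) = (k : R) • T (k - 1))
    (n k : ℤ) : wittOp D n (T k) = (k : R) • T (n + k) := by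
  rw [wittOp_apply, hD, mul_smul_comm, ← T_add]
  ring_nf

theorem wittOp_commutator {D : Module.End R R[T;T⁻¹]}
    (hD : ∀ k : ℤ, D (T k) = (k : R) • T (k - 1)) (m n : ℤ) :
    wittOp D m * wittOp D n - wittOp D n * wittOp D m = ((n - m : ℤ) : R) • wittOp D (m + n) := by
  refine LaurentPolynomial.linearMap_ext fun k => ?_
  simp only [LinearMap.sub_apply, Module.End.mul_apply, LinearMap.smul_apply, wittOp_T hD,
    map_smul, smul_smul, ← sub_smul, add_assoc, add_left_comm n m]
  congr 1
  push_cast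
  ring

theorem wittOp_commutator_apply {D : Module.End R R[T;T⁻¹]}
    (hD : ∀ k : ℤ, D (T k) = (k : R) • T (k - 1)) (m n : ℤ) (f : R[T;T⁻¹]) :
    T (m + 1) * D (T (n + 1) * D f) - T (n + 1) * D (T (m + 1) * D f) =
      ((n - m : ℤ) : R) • (T (m + n + 1) * D f) :=
  LinearMap.congr_fun (wittOp_commutator hD m n) f

end WittOperators

theorem stmt1_general (F : Type*) [Field F]
    (D : Module.End F (LaurentPolynomial F))
    (hD : ∀ k : ℤ, D (T k) = (k : F) • T (k - 1))
    (L W : ℤ → Module.End F (LaurentPolynomial F × LaurentPolynomial F))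
    (hL : ∀ (n : ℤ) (fg : LaurentPolynomial F × LaurentPolynomial F),
      L n fg = (T (n + 1) * D fg.1, T (n + 1) * D fg.2))
    (hW : ∀ (n : ℤ) (fg : LaurentPolynomial F × LaurentPolynomial F),
      W n fg = (0, T (n + 1) * D fg.1)) :
    ∀ m n : ℤ,
      L m * L n - L n * L m = ((n - m : ℤ) : F) • L (m + n) ∧
      L m * W n - W n * L m = ((n - m : ℤ) : F) • W (m + n) ∧
      W m * W n - W n * W m = 0 := by
  intro m n
  refine ⟨?_, ?_, ?_⟩ <;> refine LinearMap.ext fun fg => ?_ <;>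
    simp only [LinearMap.sub_apply, Module.End.mul_apply, LinearMap.smul_apply,
      LinearMap.zero_apply, hL, hW, map_zero, mul_zero, Prod.mk_sub_mk, sub_self,
      Prod.smul_mk, smul_zero, wittOp_commutator_apply hD, Prod.mk_zero_zero]

/-- Realization of the `W(2,2)` Lie algebra on `A ⊕ A` via
the bosonic oscillator `a = D`, `a⁺ = M_X` and fermionic oscillators
`b (f,g) = (g,0)`, `b⁺ (f,g) = (0,f)`:
`L n = (a⁺)^{n+1} a` (componentwise) and `W n = (a⁺)^{n+1} b⁺ a`. -/
theorem stmt1 (F : Type*) [Field F] [CharZero F]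
    (D : Module.End F (LaurentPolynomial F))
    (hD : ∀ k : ℤ, D (T k) = (k : F) • T (k - 1))
    (L W : ℤ → Module.End F (LaurentPolynomial F × LaurentPolynomial F))
    (hL : ∀ (n : ℤ) (fg : LaurentPolynomial F × LaurentPolynomial F),
      L n fg = (T (n + 1) * D fg.1, T (n + 1) * D fg.2))
    (hW : ∀ (n : ℤ) (fg : LaurentPolynomial F × LaurentPolynomial F),
      W n fg = (0, T (n + 1) * D fg.1)) :
    ∀ m n : ℤ,
      L m * L n - L n * L m = ((n - m : ℤ) : F) • L (m + n) ∧
      L m * W n - W n * L m = ((n - m : ℤ) : F) • W (m + n) ∧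
      W m * W n - W n * W m = 0 :=
  stmt1_general F D hD L W hL hW
end

section
/- The algebra U_q is nontrivial; that is, 1 ≠ 0 in U_q (equivalently, the two-sided ideal of the free associative algebra generated by the relations (R1)–(R6) is a proper ideal). -/
open scoped TensorProduct

/-- Generators of the algebra `U_q`: `T`, `T⁻¹`, `L n`, `W n` (`n ∈ ℤ`). -/
inductive WGen : Type
  | T : WGen
  | Tinv : WGen
  | L : ℤ → WGen
  | W : ℤ → WGen

/-- The `q`-integer `[k]_q = (q^k − q^{−k})/(q − q⁻¹)`. -/
noncomputable def qInt {F : Type*} [Field F] (q : F) (k : ℤ) : F :=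
  (q ^ k - q ^ (-k)) / (q - q⁻¹)

/-- `T^m` in the free algebra, with `T^{−k}` meaning `(T⁻¹)^k`. -/
noncomputable def Tp (F : Type*) [Field F] (m : ℤ) : FreeAlgebra F WGen :=
  if 0 ≤ m then (FreeAlgebra.ι F WGen.T) ^ m.toNat
  else (FreeAlgebra.ι F WGen.Tinv) ^ (-m).toNat

/-- The defining relations (R1)–(R6) of `U_q`. -/
inductive WRel (F : Type*) [Field F] (q : F) :
    FreeAlgebra F WGen → FreeAlgebra F WGen → Prop
  | r1a : WRel F q (FreeAlgebra.ι F WGen.T * FreeAlgebra.ι F WGen.Tinv) 1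
  | r1b : WRel F q (FreeAlgebra.ι F WGen.Tinv * FreeAlgebra.ι F WGen.T) 1
  | r2 (m n : ℤ) : WRel F q (Tp F m * FreeAlgebra.ι F (WGen.L n))
      ((q ^ (-2 * (n + 1) * m)) • (FreeAlgebra.ι F (WGen.L n) * Tp F m))
  | r3 (m n : ℤ) : WRel F q (Tp F m * FreeAlgebra.ι F (WGen.W n))
      ((q ^ (-2 * (n + 1) * m)) • (FreeAlgebra.ι F (WGen.W n) * Tp F m))
  | r4 (m n : ℤ) : WRel F q
      ((q ^ (n - m)) • (FreeAlgebra.ι F (WGen.L n) * FreeAlgebra.ι F (WGen.L m))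
        - (q ^ (m - n)) • (FreeAlgebra.ι F (WGen.L m) * FreeAlgebra.ι F (WGen.L n)))
      (qInt q (m - n) • FreeAlgebra.ι F (WGen.L (m + n)))
  | r5 (m n : ℤ) : WRel F q
      ((q ^ (n - m)) • (FreeAlgebra.ι F (WGen.L n) * FreeAlgebra.ι F (WGen.W m))
        - (q ^ (m - n)) • (FreeAlgebra.ι F (WGen.W m) * FreeAlgebra.ι F (WGen.L n)))
      (qInt q (m - n) • FreeAlgebra.ι F (WGen.W (m + n)))
  | r6 (m n : ℤ) : WRel F q
      ((q ^ (n - m)) • (FreeAlgebra.ι F (WGen.W n) * FreeAlgebra.ι F (WGen.W m))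
        - (q ^ (m - n)) • (FreeAlgebra.ι F (WGen.W m) * FreeAlgebra.ι F (WGen.W n)))
      0

/-- The algebra `U_q`, presented by generators `T, T⁻¹, L n, W n` and relations (R1)–(R6). -/
abbrev Uq (F : Type*) [Field F] (q : F) : Type _ := RingQuot (WRel F q)

/-- The image of the generator `T` in `U_q`. -/
noncomputable def UT (F : Type*) [Field F] (q : F) : Uq F q :=
  RingQuot.mkAlgHom F (WRel F q) (FreeAlgebra.ι F WGen.T)

/-- The image of the generator `T⁻¹` in `U_q`. -/
noncomputable def UTinv (F : Type*) [Field F] (q : F) : Uq F q :=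
  RingQuot.mkAlgHom F (WRel F q) (FreeAlgebra.ι F WGen.Tinv)

/-- The image of the generator `L n` in `U_q`. -/
noncomputable def UL (F : Type*) [Field F] (q : F) (n : ℤ) : Uq F q :=
  RingQuot.mkAlgHom F (WRel F q) (FreeAlgebra.ι F (WGen.L n))

/-- The image of the generator `W n` in `U_q`. -/
noncomputable def UW (F : Type*) [Field F] (q : F) (n : ℤ) : Uq F q :=
  RingQuot.mkAlgHom F (WRel F q) (FreeAlgebra.ι F (WGen.W n))

/-- `T^m` in `U_q` for `m ∈ ℤ`, with `T^{−k}` meaning `(T⁻¹)^k`. -/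
noncomputable def UTz (F : Type*) [Field F] (q : F) (m : ℤ) : Uq F q :=
  RingQuot.mkAlgHom F (WRel F q) (Tp F m)

/-!
Sending `T` and `T⁻¹` to `1` and every `L n`, `W n` to `0` respects all the relations:
(R1) becomes `1 = 1`, and every other relation has a factor `L` or `W` on both sides,
so becomes `0 = 0`. This gives a counit `U_q →ₐ[F] F`, and an algebra with a ring
homomorphism to a field is nontrivial.
-/

namespace Uq

variable (F : Type*) [Field F]

def counitGen : WGen → F
  | .T => 1
  | .Tinv => 1
  | .L _ => 0
  | .W _ => 0

noncomputable def freeCounit : FreeAlgebra F WGen →ₐ[F] F :=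
  FreeAlgebra.lift F (counitGen F)

@[simp]
lemma freeCounit_ι (g : WGen) : freeCounit F (FreeAlgebra.ι F g) = counitGen F g :=
  FreeAlgebra.lift_ι_apply _ _

@[simp]
lemma freeCounit_Tp (m : ℤ) : freeCounit F (Tp F m) = 1 := by
  unfold Tp
  split_ifs <;> simp [counitGen]

lemma freeCounit_eq_of_wRel (q : F) {x y : FreeAlgebra F WGen} (h : WRel F q x y) :
    freeCounit F x = freeCounit F y := by
  cases h <;> simp [counitGen]

noncomputable def counit (q : F) : Uq F q →ₐ[F] F :=
  RingQuot.liftAlgHom F ⟨freeCounit F, fun _ _ => freeCounit_eq_of_wRel F q⟩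

instance (q : F) : Nontrivial (Uq F q) :=
  (counit F q).toRingHom.domain_nontrivial

end Uq

theorem stmt6_general (F : Type*) [Field F] (q : F) :
    (1 : Uq F q) ≠ 0 :=
  one_ne_zero

/-- The algebra `U_q` is nontrivial, i.e. `1 ≠ 0` in `U_q`
(equivalently, the two-sided ideal generated by the relations (R1)–(R6)
is a proper ideal of the free algebra). -/
theorem stmt6 (F : Type*) [Field F] [CharZero F] (q : F) (hq : q ≠ 0)
    (hqroot : ∀ k : ℕ, 0 < k → q ^ k ≠ 1) :
    (1 : Uq F q) ≠ 0 :=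
  stmt6_general F q
end

section
/- There is a unique homomorphism of unital F-algebras Δ : U_q → U_q ⊗_F U_q satisfying Δ(T) = T ⊗ T, Δ(T⁻¹) = T⁻¹ ⊗ T⁻¹, Δ(L_n) = L_n ⊗ T^n + T^n ⊗ L_n, and Δ(W_n) = W_n ⊗ T^n + T^n ⊗ W_n for all n ∈ ℤ. -/
open scoped TensorProduct

/-! On generators `Δ` is forced, so uniqueness holds because the generators generate `U_q`;
existence amounts to checking that the lift of `Δ` to the free algebra kills (R1)–(R6).
With `g = Tⁿ` group-like, `Δ(Lₙ)` and `Δ(Wₙ)` are skew-primitive elements `x ⊗ g + g ⊗ x`, and a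
q-commutator `c Δx Δy − d Δy Δx` of two of them is the skew-primitive element built from
`c x y − d y x`, provided `c` and `d` match the factors by which `x` and `y` commute past the
group-likes; for (R4)–(R6) this is the identity `q^(n−m) q^(−2(m+1)n) = q^(m−n) q^(−2(n+1)m)`.
(R2) and (R3) hold because `T ⊗ T` commutes past `Δ(Lₙ)`, `Δ(Wₙ)` with the same factors as `T`. -/

def skewPrimitive (R : Type*) {A : Type*} [CommSemiring R] [Semiring A] [Algebra R A]
    (x g : A) : A ⊗[R] A :=
  x ⊗ₜ g + g ⊗ₜ x

section SkewPrimitive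

variable {R A : Type*}

section Semiring

variable [CommSemiring R] [Semiring A] [Algebra R A]

theorem tmul_self_mul_skewPrimitive {t x g : A} {α : R} (htg : Commute t g)
    (htx : t * x = α • (x * t)) :
    (t ⊗ₜ[R] t) * skewPrimitive R x g = α • (skewPrimitive R x g * (t ⊗ₜ[R] t)) := by
  simp only [skewPrimitive, mul_add, add_mul, Algebra.TensorProduct.tmul_mul_tmul, htx,
    htg.eq, smul_add, TensorProduct.smul_tmul', TensorProduct.tmul_smul]

theorem smul_skewPrimitive (c : R) (x g : A) :
    skewPrimitive R (c • x) g = c • skewPrimitive R x g := by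
  simp only [skewPrimitive, TensorProduct.smul_tmul', TensorProduct.tmul_smul, smul_add]

end Semiring

theorem skewPrimitive_mul_sub_mul [CommRing R] [Ring A] [Algebra R A] {x y g h : A}
    {α β c d : R} (hgh : Commute g h) (hx : h * x = α • (x * h))
    (hy : g * y = β • (y * g)) (hcd : c * β = d * α) :
    c • (skewPrimitive R x g * skewPrimitive R y h)
        - d • (skewPrimitive R y h * skewPrimitive R x g)
      = skewPrimitive R (c • (x * y) - d • (y * x)) (g * h) := by
  simp only [skewPrimitive, mul_add, add_mul, Algebra.TensorProduct.tmul_mul_tmul, hx, hy,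
    hgh.eq, TensorProduct.sub_tmul, TensorProduct.tmul_sub, ← TensorProduct.smul_tmul',
    TensorProduct.tmul_smul, smul_add, smul_smul, hcd]
  abel

end SkewPrimitive

namespace Uq

variable {F : Type*} [Field F] {q : F}

theorem UT_mul_UTinv : UT F q * UTinv F q = 1 := by
  simpa [UT, UTinv] using RingQuot.mkAlgHom_rel F (WRel.r1a (q := q))

theorem UTinv_mul_UT : UTinv F q * UT F q = 1 := by
  simpa [UT, UTinv] using RingQuot.mkAlgHom_rel F (WRel.r1b (q := q))

variable (F q) in
noncomputable def unitT : (Uq F q)ˣ :=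
  ⟨UT F q, UTinv F q, UT_mul_UTinv, UTinv_mul_UT⟩

theorem UTz_eq_unitT_zpow (m : ℤ) : UTz F q m = ↑(unitT F q ^ m) := by
  rcases le_or_gt 0 m with hm | hm
  · lift m to ℕ using hm
    simp [UTz, Tp, unitT, UT]
  · obtain ⟨k, rfl⟩ : ∃ k : ℕ, m = -k := ⟨(-m).toNat, by omega⟩
    have hk : ¬ 0 ≤ -(k : ℤ) := by omega
    rw [UTz, Tp, if_neg hk, neg_neg, Int.toNat_natCast, map_pow, zpow_neg, zpow_natCast,
      ← inv_pow, Units.val_pow_eq_pow_val]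
    rfl

theorem UTz_add (m n : ℤ) : UTz F q (m + n) = UTz F q m * UTz F q n := by
  simp only [UTz_eq_unitT_zpow, zpow_add, Units.val_mul]

theorem commute_UTz (m n : ℤ) : Commute (UTz F q m) (UTz F q n) := by
  rw [Commute, SemiconjBy, ← UTz_add, ← UTz_add, add_comm]

theorem UTz_mul_UL (m n : ℤ) :
    UTz F q m * UL F q n = q ^ (-2 * (n + 1) * m) • (UL F q n * UTz F q m) := by
  simpa [UTz, UL] using RingQuot.mkAlgHom_rel F (WRel.r2 (q := q) m n)

theorem UTz_mul_UW (m n : ℤ) :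
    UTz F q m * UW F q n = q ^ (-2 * (n + 1) * m) • (UW F q n * UTz F q m) := by
  simpa [UTz, UW] using RingQuot.mkAlgHom_rel F (WRel.r3 (q := q) m n)

theorem qcomm_UL_UL (m n : ℤ) :
    q ^ (n - m) • (UL F q n * UL F q m) - q ^ (m - n) • (UL F q m * UL F q n)
      = qInt q (m - n) • UL F q (m + n) := by
  simpa [UL] using RingQuot.mkAlgHom_rel F (WRel.r4 (q := q) m n)

theorem qcomm_UL_UW (m n : ℤ) :
    q ^ (n - m) • (UL F q n * UW F q m) - q ^ (m - n) • (UW F q m * UL F q n)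
      = qInt q (m - n) • UW F q (m + n) := by
  simpa [UL, UW] using RingQuot.mkAlgHom_rel F (WRel.r5 (q := q) m n)

theorem qcomm_UW_UW (m n : ℤ) :
    q ^ (n - m) • (UW F q n * UW F q m) - q ^ (m - n) • (UW F q m * UW F q n) = 0 := by
  simpa [UW] using RingQuot.mkAlgHom_rel F (WRel.r6 (q := q) m n)

theorem zpow_sub_mul_zpow_symm (hq : q ≠ 0) (m n : ℤ) :
    q ^ (n - m) * q ^ (-2 * (m + 1) * n) = q ^ (m - n) * q ^ (-2 * (n + 1) * m) := by
  rw [← zpow_add₀ hq, ← zpow_add₀ hq]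
  ring_nf

variable (F q) in
noncomputable def coproductGen : WGen → Uq F q ⊗[F] Uq F q
  | .T => UT F q ⊗ₜ UT F q
  | .Tinv => UTinv F q ⊗ₜ UTinv F q
  | .L n => skewPrimitive F (UL F q n) (UTz F q n)
  | .W n => skewPrimitive F (UW F q n) (UTz F q n)

theorem lift_coproductGen_Tp (m : ℤ) :
    FreeAlgebra.lift F (coproductGen F q) (Tp F m) = UTz F q m ⊗ₜ UTz F q m := by
  unfold UTz Tp
  split_ifs <;> simp [coproductGen, Algebra.TensorProduct.tmul_pow, UT, UTinv]

theorem lift_coproductGen_eq_of_rel (hq : q ≠ 0) {a b : FreeAlgebra F WGen}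
    (h : WRel F q a b) :
    FreeAlgebra.lift F (coproductGen F q) a = FreeAlgebra.lift F (coproductGen F q) b := by
  cases h with
  | r1a =>
    simp only [map_mul, map_one, FreeAlgebra.lift_ι_apply, coproductGen,
      Algebra.TensorProduct.tmul_mul_tmul, UT_mul_UTinv, Algebra.TensorProduct.one_def]
  | r1b =>
    simp only [map_mul, map_one, FreeAlgebra.lift_ι_apply, coproductGen,
      Algebra.TensorProduct.tmul_mul_tmul, UTinv_mul_UT, Algebra.TensorProduct.one_def]
  | r2 m n =>
    simp only [map_mul, map_smul, lift_coproductGen_Tp, FreeAlgebra.lift_ι_apply, coproductGen]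
    exact tmul_self_mul_skewPrimitive (commute_UTz m n) (UTz_mul_UL m n)
  | r3 m n =>
    simp only [map_mul, map_smul, lift_coproductGen_Tp, FreeAlgebra.lift_ι_apply, coproductGen]
    exact tmul_self_mul_skewPrimitive (commute_UTz m n) (UTz_mul_UW m n)
  | r4 m n =>
    simp only [map_sub, map_smul, map_mul, FreeAlgebra.lift_ι_apply, coproductGen]
    rw [skewPrimitive_mul_sub_mul (commute_UTz n m) (UTz_mul_UL m n) (UTz_mul_UL n m)
      (zpow_sub_mul_zpow_symm hq m n), qcomm_UL_UL, ← UTz_add, add_comm n m,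
      smul_skewPrimitive]
  | r5 m n =>
    simp only [map_sub, map_smul, map_mul, FreeAlgebra.lift_ι_apply, coproductGen]
    rw [skewPrimitive_mul_sub_mul (commute_UTz n m) (UTz_mul_UL m n) (UTz_mul_UW n m)
      (zpow_sub_mul_zpow_symm hq m n), qcomm_UL_UW, ← UTz_add, add_comm n m,
      smul_skewPrimitive]
  | r6 m n =>
    simp only [map_sub, map_smul, map_mul, FreeAlgebra.lift_ι_apply, coproductGen, map_zero]
    rw [skewPrimitive_mul_sub_mul (commute_UTz n m) (UTz_mul_UW m n) (UTz_mul_UW n m)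
      (zpow_sub_mul_zpow_symm hq m n), qcomm_UW_UW]
    simp [skewPrimitive]

variable (q) in
noncomputable def coproduct (hq : q ≠ 0) : Uq F q →ₐ[F] Uq F q ⊗[F] Uq F q :=
  RingQuot.liftAlgHom F
    ⟨FreeAlgebra.lift F (coproductGen F q), fun _ _ => lift_coproductGen_eq_of_rel hq⟩

theorem coproduct_mkAlgHom_ι (hq : q ≠ 0) (x : WGen) :
    coproduct q hq (RingQuot.mkAlgHom F (WRel F q) (FreeAlgebra.ι F x))
      = coproductGen F q x := by
  simp [coproduct]

theorem algHom_ext {A : Type*} [Semiring A] [Algebra F A] {φ ψ : Uq F q →ₐ[F] A}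
    (h : ∀ x, φ (RingQuot.mkAlgHom F (WRel F q) (FreeAlgebra.ι F x))
      = ψ (RingQuot.mkAlgHom F (WRel F q) (FreeAlgebra.ι F x))) : φ = ψ :=
  RingQuot.ringQuot_ext' F φ ψ (FreeAlgebra.hom_ext (funext h))

end Uq

theorem stmt8_general (F : Type*) [Field F] (q : F) (hq : q ≠ 0) :
    ∃! Δ : Uq F q →ₐ[F] (Uq F q ⊗[F] Uq F q),
      Δ (UT F q) = UT F q ⊗ₜ[F] UT F q ∧
      Δ (UTinv F q) = UTinv F q ⊗ₜ[F] UTinv F q ∧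
      (∀ n : ℤ, Δ (UL F q n) = UL F q n ⊗ₜ[F] UTz F q n + UTz F q n ⊗ₜ[F] UL F q n) ∧
      (∀ n : ℤ, Δ (UW F q n) = UW F q n ⊗ₜ[F] UTz F q n + UTz F q n ⊗ₜ[F] UW F q n) := by
  have hgen := Uq.coproduct_mkAlgHom_ι hq
  refine ⟨Uq.coproduct q hq,
    ⟨hgen .T, hgen .Tinv, fun n => hgen (.L n), fun n => hgen (.W n)⟩, ?_⟩
  rintro Δ ⟨hT, hTinv, hL, hW⟩
  refine Uq.algHom_ext fun x => ?_
  rw [hgen]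
  cases x with
  | T => exact hT
  | Tinv => exact hTinv
  | L n => exact hL n
  | W n => exact hW n

/-- There is a unique homomorphism of unital `F`-algebras
`Δ : U_q → U_q ⊗_F U_q` with `Δ(T) = T ⊗ T`, `Δ(T⁻¹) = T⁻¹ ⊗ T⁻¹`,
`Δ(L_n) = L_n ⊗ T^n + T^n ⊗ L_n` and `Δ(W_n) = W_n ⊗ T^n + T^n ⊗ W_n`. -/
theorem stmt8 (F : Type*) [Field F] [CharZero F] (q : F) (hq : q ≠ 0)
    (hqroot : ∀ k : ℕ, 0 < k → q ^ k ≠ 1) :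
    ∃! Δ : Uq F q →ₐ[F] (Uq F q ⊗[F] Uq F q),
      Δ (UT F q) = UT F q ⊗ₜ[F] UT F q ∧
      Δ (UTinv F q) = UTinv F q ⊗ₜ[F] UTinv F q ∧
      (∀ n : ℤ, Δ (UL F q n) = UL F q n ⊗ₜ[F] UTz F q n + UTz F q n ⊗ₜ[F] UL F q n) ∧
      (∀ n : ℤ, Δ (UW F q n) = UW F q n ⊗ₜ[F] UTz F q n + UTz F q n ⊗ₜ[F] UW F q n) :=
  stmt8_general F q hq
end

section
/- The maps Δ, ε, S on U_q satisfy the antipode axioms: m ∘ (id ⊗ S) ∘ Δ = ι ∘ ε and m ∘ (S ⊗ id) ∘ Δ = ι ∘ ε as F-linear maps U_q → U_q, where m : U_q ⊗_F U_q → U_q is the multiplication map m(u ⊗ u') = u u' and ι : F → U_q is the unit embedding ι(a) = a·1. -/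
/-!
Both antipode identities are linear in `u`, and because `Δ`, `ε` are multiplicative while `S`
reverses products, the set of `u` satisfying either identity is a subalgebra (for `Δ u = Σ aᵢ ⊗ bᵢ`
and `Δ v = Σ cⱼ ⊗ dⱼ`, the sum `Σ aᵢ cⱼ S(dⱼ) S(bᵢ)` collapses to `ε(v) Σ aᵢ S(bᵢ)`). It therefore
suffices to check the generators: `T^{±1}` are group-like with `S` inverting them, and `L_n`, `W_n`
are skew-primitive, `Δ x = x ⊗ T^n + T^n ⊗ x`, with `S x = -T^{-n} x T^{-n}`, so the two terms
cancel.
-/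

open scoped TensorProduct

open TensorProduct (map)
open LinearMap (mul' id)

section Antipode

variable {R A : Type*} [CommSemiring R] [Semiring A] [Algebra R A]
  (Δ : A →ₐ[R] A ⊗[R] A) (ε : A →ₐ[R] R) (S : A →ₗ[R] A)

theorem map_pow_of_antimul (hS1 : S 1 = 1) (hS : ∀ u v, S (u * v) = S v * S u) (a : A) (k : ℕ) :
    S (a ^ k) = S a ^ k := by
  induction k with
  | zero => simpa using hS1
  | succ k ih => rw [pow_succ, hS, ih, ← pow_succ']

theorem map_units_zpow_of_antimul (hS1 : S 1 = 1) (hS : ∀ u v, S (u * v) = S v * S u) (g : Aˣ)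
    (hg : S g = ↑g⁻¹) (hg' : S ↑g⁻¹ = g) (n : ℤ) : S ↑(g ^ n) = ↑(g ^ n)⁻¹ := by
  obtain ⟨k, rfl | rfl⟩ := Int.eq_nat_or_neg n
  · simp only [zpow_natCast, Units.val_pow_eq_pow_val, map_pow_of_antimul S hS1 hS, hg, ← inv_pow]
  · simp only [zpow_neg, zpow_natCast, inv_inv, ← inv_pow, Units.val_pow_eq_pow_val,
      map_pow_of_antimul S hS1 hS, hg']

variable {S}

theorem mul'_map_id_antipode_tmul_mul (hS : ∀ u v, S (u * v) = S v * S u) (a b : A) (Y : A ⊗[R] A) :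
    mul' R A (map id S ((a ⊗ₜ b) * Y)) = a * mul' R A (map id S Y) * S b := by
  induction Y using TensorProduct.induction_on with
  | zero => simp
  | tmul c d => simp [Algebra.TensorProduct.tmul_mul_tmul, hS, mul_assoc]
  | add X Y hX hY => simp only [mul_add, map_add, hX, hY, add_mul]

theorem mul'_map_antipode_id_mul_tmul (hS : ∀ u v, S (u * v) = S v * S u) (c d : A) (X : A ⊗[R] A) :
    mul' R A (map S id (X * (c ⊗ₜ d))) = S c * mul' R A (map S id X) * d := by
  induction X using TensorProduct.induction_on with
  | zero => simp
  | tmul a b => simp [Algebra.TensorProduct.tmul_mul_tmul, hS, mul_assoc]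
  | add X Y hX hY => simp only [add_mul, map_add, hX, hY, mul_add]

theorem mul'_map_id_antipode_mul_of_eq_algebraMap (hS : ∀ u v, S (u * v) = S v * S u) {Y : A ⊗[R] A}
    {r : R} (hY : mul' R A (map id S Y) = algebraMap R A r) (X : A ⊗[R] A) :
    mul' R A (map id S (X * Y)) = r • mul' R A (map id S X) := by
  induction X using TensorProduct.induction_on with
  | zero => simp
  | tmul a b =>
    rw [mul'_map_id_antipode_tmul_mul hS, hY, TensorProduct.map_tmul, LinearMap.mul'_apply,
      Algebra.smul_def, LinearMap.id_apply, ← Algebra.commutes, mul_assoc]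
  | add X X' hX hX' => simp only [add_mul, map_add, hX, hX', smul_add]

theorem mul'_map_antipode_id_mul_of_eq_algebraMap (hS : ∀ u v, S (u * v) = S v * S u) {X : A ⊗[R] A}
    {r : R} (hX : mul' R A (map S id X) = algebraMap R A r) (Y : A ⊗[R] A) :
    mul' R A (map S id (X * Y)) = r • mul' R A (map S id Y) := by
  induction Y using TensorProduct.induction_on with
  | zero => simp
  | tmul c d =>
    rw [mul'_map_antipode_id_mul_tmul hS, hX, TensorProduct.map_tmul, LinearMap.mul'_apply,
      Algebra.smul_def, ← Algebra.commutes, mul_assoc, LinearMap.id_apply]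
  | add Y Y' hY hY' => simp only [mul_add, map_add, hY, hY', smul_add]

variable (S)

def leftAntipodeLocus (hS1 : S 1 = 1) (hS : ∀ u v, S (u * v) = S v * S u) : Subalgebra R A where
  carrier := {u | mul' R A (map id S (Δ u)) = algebraMap R A (ε u)}
  mul_mem' {u v} hu hv := by
    simp only [Set.mem_ofPred_eq, map_mul] at *
    rw [mul'_map_id_antipode_mul_of_eq_algebraMap hS hv, hu, Algebra.smul_def]
    exact Algebra.commutes _ _
  add_mem' hu hv := by simp_all only [Set.mem_ofPred_eq, map_add]
  algebraMap_mem' r := by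
    simp [AlgHom.commutes, Algebra.TensorProduct.algebraMap_apply, hS1]

def rightAntipodeLocus (hS1 : S 1 = 1) (hS : ∀ u v, S (u * v) = S v * S u) : Subalgebra R A where
  carrier := {u | mul' R A (map S id (Δ u)) = algebraMap R A (ε u)}
  mul_mem' {u v} hu hv := by
    simp only [Set.mem_ofPred_eq, map_mul] at *
    rw [mul'_map_antipode_id_mul_of_eq_algebraMap hS hu, hv, Algebra.smul_def, ← map_mul]
  add_mem' hu hv := by simp_all only [Set.mem_ofPred_eq, map_add]
  algebraMap_mem' r := by
    simp only [Set.mem_ofPred_eq, AlgHom.commutes, Algebra.TensorProduct.algebraMap_apply]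
    simp [Algebra.algebraMap_eq_smul_one, hS1]

end Antipode

section GroupLike

variable {R A : Type*} [CommSemiring R] [Semiring A] [Algebra R A]
  {Δ : A →ₐ[R] A ⊗[R] A} {ε : A →ₐ[R] R} {S : A →ₗ[R] A} {g g' : A}

theorem mul'_map_id_antipode_grouplike (hΔ : Δ g = g ⊗ₜ g) (hε : ε g = 1) (hS : S g = g')
    (hgg' : g * g' = 1) : mul' R A (map id S (Δ g)) = algebraMap R A (ε g) := by
  simp [hΔ, hε, hS, hgg']

theorem mul'_map_antipode_id_grouplike (hΔ : Δ g = g ⊗ₜ g) (hε : ε g = 1) (hS : S g = g')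
    (hg'g : g' * g = 1) : mul' R A (map S id (Δ g)) = algebraMap R A (ε g) := by
  simp [hΔ, hε, hS, hg'g]

end GroupLike

section SkewPrimitive

variable {R A : Type*} [CommSemiring R] [Ring A] [Algebra R A]
  {Δ : A →ₐ[R] A ⊗[R] A} {ε : A →ₐ[R] R} {S : A →ₗ[R] A} {g g' x : A}

theorem mul'_map_id_antipode_skewPrimitive (hΔ : Δ x = x ⊗ₜ g + g ⊗ₜ x) (hε : ε x = 0)
    (hSg : S g = g') (hSx : S x = -(g' * x * g')) (hgg' : g * g' = 1) :
    mul' R A (map id S (Δ x)) = algebraMap R A (ε x) := by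
  simp [hΔ, hε, hSg, hSx, ← mul_assoc, hgg']

theorem mul'_map_antipode_id_skewPrimitive (hΔ : Δ x = x ⊗ₜ g + g ⊗ₜ x) (hε : ε x = 0)
    (hSg : S g = g') (hSx : S x = -(g' * x * g')) (hg'g : g' * g = 1) :
    mul' R A (map S id (Δ x)) = algebraMap R A (ε x) := by
  simp [hΔ, hε, hSg, hSx, mul_assoc, hg'g]

end SkewPrimitive

section Presentation

variable (F : Type*) [Field F] (q : F)

theorem UT_mul_UTinv : UT F q * UTinv F q = 1 := by
  rw [UT, UTinv, ← map_mul, ← map_one (RingQuot.mkAlgHom F (WRel F q))]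
  exact RingQuot.mkAlgHom_rel F WRel.r1a

theorem UTinv_mul_UT : UTinv F q * UT F q = 1 := by
  rw [UT, UTinv, ← map_mul, ← map_one (RingQuot.mkAlgHom F (WRel F q))]
  exact RingQuot.mkAlgHom_rel F WRel.r1b

noncomputable def unitT : (Uq F q)ˣ :=
  ⟨UT F q, UTinv F q, UT_mul_UTinv F q, UTinv_mul_UT F q⟩

theorem UTz_eq_zpow_unitT (n : ℤ) : UTz F q n = ↑(unitT F q ^ n) := by
  rcases n with k | k
  · simp [UTz, Tp, UT, unitT]
  · simp [UTz, Tp, UTinv, unitT, zpow_negSucc]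

theorem UTz_mul_UTz_neg (n : ℤ) : UTz F q n * UTz F q (-n) = 1 := by
  rw [UTz_eq_zpow_unitT, UTz_eq_zpow_unitT, zpow_neg, Units.mul_inv]

theorem UTz_neg_mul_UTz (n : ℤ) : UTz F q (-n) * UTz F q n = 1 := by
  simpa using UTz_mul_UTz_neg F q (-n)

theorem map_UTz_of_antimul {S : Uq F q →ₗ[F] Uq F q} (hS1 : S 1 = 1)
    (hS : ∀ u v, S (u * v) = S v * S u) (hST : S (UT F q) = UTinv F q)
    (hSTinv : S (UTinv F q) = UT F q) (n : ℤ) : S (UTz F q n) = UTz F q (-n) := by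
  rw [UTz_eq_zpow_unitT, UTz_eq_zpow_unitT, zpow_neg]
  exact map_units_zpow_of_antimul S hS1 hS _ hST hSTinv n

theorem Uq.eq_top_of_generators_mem {B : Subalgebra F (Uq F q)} (hT : UT F q ∈ B)
    (hTinv : UTinv F q ∈ B) (hL : ∀ n, UL F q n ∈ B) (hW : ∀ n, UW F q n ∈ B) : B = ⊤ := by
  rw [eq_top_iff]
  rintro u -
  obtain ⟨x, rfl⟩ := RingQuot.mkAlgHom_surjective F (WRel F q) u
  induction x using FreeAlgebra.induction with
  | grade0 r => rw [AlgHom.commutes]; exact B.algebraMap_mem r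
  | grade1 g => cases g with
    | T => exact hT
    | Tinv => exact hTinv
    | L n => exact hL n
    | W n => exact hW n
  | mul a b ha hb => rw [map_mul]; exact B.mul_mem ha hb
  | add a b ha hb => rw [map_add]; exact B.add_mem ha hb

end Presentation

theorem stmt13_general (F : Type*) [Field F] (q : F)
    (Δ : Uq F q →ₐ[F] (Uq F q ⊗[F] Uq F q))
    (hΔT : Δ (UT F q) = UT F q ⊗ₜ[F] UT F q)
    (hΔTinv : Δ (UTinv F q) = UTinv F q ⊗ₜ[F] UTinv F q)
    (hΔL : ∀ n : ℤ, Δ (UL F q n) = UL F q n ⊗ₜ[F] UTz F q n + UTz F q n ⊗ₜ[F] UL F q n)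
    (hΔW : ∀ n : ℤ, Δ (UW F q n) = UW F q n ⊗ₜ[F] UTz F q n + UTz F q n ⊗ₜ[F] UW F q n)
    (ε : Uq F q →ₐ[F] F)
    (hεT : ε (UT F q) = 1) (hεTinv : ε (UTinv F q) = 1)
    (hεL : ∀ n : ℤ, ε (UL F q n) = 0) (hεW : ∀ n : ℤ, ε (UW F q n) = 0)
    (S : Uq F q →ₗ[F] Uq F q)
    (hSone : S 1 = 1)
    (hSmul : ∀ u v : Uq F q, S (u * v) = S v * S u)
    (hST : S (UT F q) = UTinv F q)
    (hSTinv : S (UTinv F q) = UT F q)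
    (hSL : ∀ m : ℤ, S (UL F q m) = -(UTz F q (-m) * UL F q m * UTz F q (-m)))
    (hSW : ∀ m : ℤ, S (UW F q m) = -(UTz F q (-m) * UW F q m * UTz F q (-m))) :
    ∀ u : Uq F q,
      LinearMap.mul' F (Uq F q) (TensorProduct.map LinearMap.id S (Δ u))
        = algebraMap F (Uq F q) (ε u) ∧
      LinearMap.mul' F (Uq F q) (TensorProduct.map S LinearMap.id (Δ u))
        = algebraMap F (Uq F q) (ε u) := by
  have hSTz := map_UTz_of_antimul F q hSone hSmul hST hSTinv
  have hleft : leftAntipodeLocus Δ ε S hSone hSmul = ⊤ := Uq.eq_top_of_generators_mem F q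
    (mul'_map_id_antipode_grouplike hΔT hεT hST (UT_mul_UTinv F q))
    (mul'_map_id_antipode_grouplike hΔTinv hεTinv hSTinv (UTinv_mul_UT F q))
    (fun n => mul'_map_id_antipode_skewPrimitive (hΔL n) (hεL n) (hSTz n) (hSL n)
      (UTz_mul_UTz_neg F q n))
    (fun n => mul'_map_id_antipode_skewPrimitive (hΔW n) (hεW n) (hSTz n) (hSW n)
      (UTz_mul_UTz_neg F q n))
  have hright : rightAntipodeLocus Δ ε S hSone hSmul = ⊤ := Uq.eq_top_of_generators_mem F q
    (mul'_map_antipode_id_grouplike hΔT hεT hST (UTinv_mul_UT F q))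
    (mul'_map_antipode_id_grouplike hΔTinv hεTinv hSTinv (UT_mul_UTinv F q))
    (fun n => mul'_map_antipode_id_skewPrimitive (hΔL n) (hεL n) (hSTz n) (hSL n)
      (UTz_neg_mul_UTz F q n))
    (fun n => mul'_map_antipode_id_skewPrimitive (hΔW n) (hεW n) (hSTz n) (hSW n)
      (UTz_neg_mul_UTz F q n))
  exact fun u => ⟨hleft.ge Algebra.mem_top, hright.ge Algebra.mem_top⟩

/-- The maps `Δ, ε, S` on `U_q` satisfy the antipode axioms:
`m ∘ (id ⊗ S) ∘ Δ = ι ∘ ε` and `m ∘ (S ⊗ id) ∘ Δ = ι ∘ ε`, where `m` is the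
multiplication map `U_q ⊗ U_q → U_q` and `ι : F → U_q` the unit embedding. -/
theorem stmt13 (F : Type*) [Field F] [CharZero F] (q : F) (hq : q ≠ 0)
    (hqroot : ∀ k : ℕ, 0 < k → q ^ k ≠ 1)
    (Δ : Uq F q →ₐ[F] (Uq F q ⊗[F] Uq F q))
    (hΔT : Δ (UT F q) = UT F q ⊗ₜ[F] UT F q)
    (hΔTinv : Δ (UTinv F q) = UTinv F q ⊗ₜ[F] UTinv F q)
    (hΔL : ∀ n : ℤ, Δ (UL F q n) = UL F q n ⊗ₜ[F] UTz F q n + UTz F q n ⊗ₜ[F] UL F q n)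
    (hΔW : ∀ n : ℤ, Δ (UW F q n) = UW F q n ⊗ₜ[F] UTz F q n + UTz F q n ⊗ₜ[F] UW F q n)
    (ε : Uq F q →ₐ[F] F)
    (hεT : ε (UT F q) = 1) (hεTinv : ε (UTinv F q) = 1)
    (hεL : ∀ n : ℤ, ε (UL F q n) = 0) (hεW : ∀ n : ℤ, ε (UW F q n) = 0)
    (S : Uq F q →ₗ[F] Uq F q)
    (hSone : S 1 = 1)
    (hSmul : ∀ u v : Uq F q, S (u * v) = S v * S u)
    (hST : S (UT F q) = UTinv F q)
    (hSTinv : S (UTinv F q) = UT F q)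
    (hSL : ∀ m : ℤ, S (UL F q m) = -(UTz F q (-m) * UL F q m * UTz F q (-m)))
    (hSW : ∀ m : ℤ, S (UW F q m) = -(UTz F q (-m) * UW F q m * UTz F q (-m))) :
    ∀ u : Uq F q,
      LinearMap.mul' F (Uq F q) (TensorProduct.map LinearMap.id S (Δ u))
        = algebraMap F (Uq F q) (ε u) ∧
      LinearMap.mul' F (Uq F q) (TensorProduct.map S LinearMap.id (Δ u))
        = algebraMap F (Uq F q) (ε u) :=
  stmt13_general F q Δ hΔT hΔTinv hΔL hΔW ε hεT hεTinv hεL hεW S hSone hSmul hST hSTinv hSL hSW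
end
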